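/- arXiv:1901.05702 — 6 statements merged into one kernel-verified Lean document; each statement's English description precedes it below -/
import Mathlib

section
/- Every symmetric F-bilinear map C₀(-q) × C₀(-q) → C₀(-q) can be written in the form F_{abc}(x,y) = a·x·y + b·(x̄·y + x·ȳ) + c·(x·y)‾ for some triple (a,b,c) ∈ C₀(-q)³, where products are Clifford products and z̄ denotes Clifford conjugation. -/
/-!
A symmetric bilinear map `G` on `A = 𝕜 ⊕ 𝕜τ` is determined by the three values `G 1 1`, `G 1 τ`,
`G τ τ`. Since `conj τ = -τ`, the map `F_{abc}` takes the values `a + 2b + c`, `(a - c) τ` and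
`(a - 2b + c) τ²` there, and this triangular system can be solved for `a, b, c` as soon as `2` and
`τ` are units.
-/

namespace LinearMap

theorem ext_basis_fin_two_of_symm {R M N : Type*} [CommSemiring R] [AddCommMonoid M]
    [AddCommMonoid N] [Module R M] [Module R N] (b : Module.Basis (Fin 2) R M)
    {G H : M →ₗ[R] M →ₗ[R] N} (hG : ∀ x y, G x y = G y x) (hH : ∀ x y, H x y = H y x)
    (h00 : G (b 0) (b 0) = H (b 0) (b 0)) (h01 : G (b 0) (b 1) = H (b 0) (b 1))
    (h11 : G (b 1) (b 1) = H (b 1) (b 1)) : G = H := by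
  refine b.ext fun i => b.ext fun j => ?_
  fin_cases i <;> fin_cases j <;> simp only [Fin.zero_eta, Fin.mk_one]
  exacts [h00, h01, by rw [hG, hH, h01], h11]

end LinearMap

section SymmForm

variable {R A : Type*} [CommSemiring R] [CommRing A] [Algebra R A]

/-- The paper's `F_{abc}`. -/
def symmForm (conj : A →ₐ[R] A) (a b c : A) : A →ₗ[R] A →ₗ[R] A :=
  LinearMap.mk₂ R (fun x y => a * x * y + b * (conj x * y + x * conj y) + c * conj (x * y))
    (fun x x' y => by simp only [map_mul, map_add]; ring)
    (fun r x y => by simp only [map_mul, Algebra.smul_def, AlgHom.commutes]; ring)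
    (fun x y y' => by simp only [map_mul, map_add]; ring)
    (fun r x y => by simp only [map_mul, Algebra.smul_def, AlgHom.commutes]; ring)

variable (conj : A →ₐ[R] A) (a b c : A)

@[simp]
theorem symmForm_apply (x y : A) :
    symmForm conj a b c x y = a * x * y + b * (conj x * y + x * conj y) + c * conj (x * y) :=
  rfl

theorem symmForm_comm (x y : A) : symmForm conj a b c x y = symmForm conj a b c y x := by
  simp only [symmForm_apply, mul_comm y x]
  ring

theorem symmForm_one_one : symmForm conj a b c 1 1 = a + 2 * b + c := by
  simp only [symmForm_apply, mul_one, map_one]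
  ring

variable {conj} {τ : A} (hτ : conj τ = -τ)
include hτ

theorem symmForm_one_of_conj_eq_neg : symmForm conj a b c 1 τ = (a - c) * τ := by
  simp only [symmForm_apply, map_one, map_mul, hτ]
  ring

theorem symmForm_self_of_conj_eq_neg : symmForm conj a b c τ τ = (a - 2 * b + c) * (τ * τ) := by
  simp only [symmForm_apply, map_mul, hτ]
  ring

end SymmForm

theorem exists_triangular_solution {A : Type*} [CommRing A] {τ : A} (h2 : IsUnit (2 : A))
    (hτ : IsUnit τ) (g₀ g₁ g₂ : A) :
    ∃ a b c : A, a + 2 * b + c = g₀ ∧ (a - c) * τ = g₁ ∧ (a - 2 * b + c) * (τ * τ) = g₂ := by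
  obtain ⟨i, hi⟩ := h2.exists_right_inv
  obtain ⟨j, hj⟩ := hτ.exists_right_inv
  -- `s = a + c`, `t = a - c`
  set s := i * (g₀ + g₂ * j * j)
  set t := g₁ * j
  refine ⟨i * (s + t), i * i * (g₀ - g₂ * j * j), i * (s - t), ?_, ?_, ?_⟩
  · linear_combination (2 * i + 1) * g₀ * hi
  · linear_combination 2 * i * g₁ * hj + g₁ * hi
  · linear_combination g₂ * (2 * i * j * τ + 1) * (2 * i * hj + hi)

theorem stmt_7_general (𝕜 A : Type*) [Field 𝕜] (h2 : (2 : 𝕜) ≠ 0)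
    [CommRing A] [Algebra 𝕜 A]
    (τ : A) (β : 𝕜) (hβ : β ≠ 0) (hτ : τ * τ = algebraMap 𝕜 A (-β))
    (bA : Module.Basis (Fin 2) 𝕜 A) (hb0 : bA 0 = 1) (hb1 : bA 1 = τ)
    (conj : A ≃ₐ[𝕜] A) (hconjτ : conj τ = -τ)
    (G : A →ₗ[𝕜] A →ₗ[𝕜] A) (hG : ∀ x y, G x y = G y x) :
    ∃ a b c : A, ∀ x y : A,
      G x y = a * x * y + b * (conj x * y + x * conj y) + c * conj (x * y) := by
  have h2A : IsUnit (2 : A) := by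
    simpa only [map_ofNat] using (IsUnit.mk0 _ h2).map (algebraMap 𝕜 A)
  have hτA : IsUnit τ := by
    refine isUnit_of_mul_isUnit_left (y := τ) ?_
    rw [hτ]
    exact (IsUnit.mk0 _ (neg_ne_zero.mpr hβ)).map _
  obtain ⟨a, b, c, h00, h01, h11⟩ := exists_triangular_solution h2A hτA (G 1 1) (G 1 τ) (G τ τ)
  have hconj : conj.toAlgHom τ = -τ := hconjτ
  have hF : G = symmForm conj.toAlgHom a b c := by
    refine LinearMap.ext_basis_fin_two_of_symm bA hG (symmForm_comm _ a b c) ?_ ?_ ?_ <;>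
      simp only [hb0, hb1]
    · rw [symmForm_one_one, h00]
    · rw [symmForm_one_of_conj_eq_neg a b c hconj, h01]
    · rw [symmForm_self_of_conj_eq_neg a b c hconj, h11]
  exact ⟨a, b, c, fun x y => by rw [hF]; rfl⟩

/-- let `A` be a model of the even Clifford algebra `C₀(-q)`:
a commutative algebra with basis `{1, τ}` where `τ = v₁·v₂`, `τ² = -β`,
and conjugation determined by `conj τ = -τ`.  Every symmetric `𝕜`-bilinear
map `G : A × A → A` is of the form
`F_{abc}(x,y) = a·x·y + b·(x̄·y + x·ȳ) + c·(x·y)‾` for some `a, b, c ∈ A`. -/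
theorem stmt_7 (𝕜 A : Type*) [Field 𝕜] (h2 : (2 : 𝕜) ≠ 0) (h3 : (3 : 𝕜) ≠ 0)
    [CommRing A] [Algebra 𝕜 A]
    (τ : A) (β : 𝕜) (hβ : β ≠ 0) (hτ : τ * τ = algebraMap 𝕜 A (-β))
    (bA : Module.Basis (Fin 2) 𝕜 A) (hb0 : bA 0 = 1) (hb1 : bA 1 = τ)
    (conj : A ≃ₐ[𝕜] A) (hconjτ : conj τ = -τ)
    (G : A →ₗ[𝕜] A →ₗ[𝕜] A) (hG : ∀ x y, G x y = G y x) :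
    ∃ a b c : A, ∀ x y : A,
      G x y = a * x * y + b * (conj x * y + x * conj y) + c * conj (x * y) :=
  stmt_7_general 𝕜 A h2 τ β hβ hτ bA hb0 hb1 conj hconjτ G hG
end

section
/- Two maps F_{ac} and F_{a'c'} (with F_{ac}(x,y) = a·x·y + c·(x·y)‾, N(c) - N(a) = 1 = N(c') - N(a')) are isomorphic under the isometry group of (C₀(-q), N) if and only if there exists λ ∈ C₀(-q) with N(λ) = 1 such that either (a',c') = (λ⁻¹a, λ³c) or (a',c') = (λ⁻¹ā, λ³c̄). -/
/-!
An isometry `u` of `N x = x x̄` has `N (u 1) = 1`, and `v = (u 1)‾ · u` is an isometry fixing `1`.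
Polarising `N (1 + x)` shows that `v` preserves the trace `x + x̄`, so `v τ` is a trace-zero
element of norm `N τ`, i.e. `±τ`; hence `u` is `x ↦ p x` or `x ↦ p x̄` with `p = u 1`.
For `u = (p · )`, the intertwining identity at `y = 1` reads
`(p a - a' p²) z + (p c - c' p̄²) z̄ = 0` for all `z`, and testing `z = 1, τ` kills both
coefficients; the case `u = p · conj` reduces to this one after substituting `x̄, ȳ`.
-/

open Function

section IsometryClassification

variable {𝕜 A : Type*} [Field 𝕜] [CommRing A] [Algebra 𝕜 A] {conj : A ≃ₐ[𝕜] A} {τ : A}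

theorem involutive_of_basis_one_of_map_eq_neg (bA : Module.Basis (Fin 2) 𝕜 A)
    (hb0 : bA 0 = 1) (hb1 : bA 1 = τ) (hconjτ : conj τ = -τ) : Involutive conj := by
  have h : conj.toLinearMap ∘ₗ conj.toLinearMap = LinearMap.id := bA.ext fun i => by
    fin_cases i <;> simp [hb0, hb1, hconjτ]
  exact fun x => LinearMap.congr_fun h x

theorem exists_eq_smul_of_add_conj_eq_zero (h2 : (2 : 𝕜) ≠ 0) (bA : Module.Basis (Fin 2) 𝕜 A)
    (hb0 : bA 0 = 1) (hb1 : bA 1 = τ) (hconjτ : conj τ = -τ) {w : A}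
    (hw : w + conj w = 0) : ∃ t : 𝕜, w = t • τ := by
  obtain ⟨s, t, rfl⟩ : ∃ s t : 𝕜, w = s • (1 : A) + t • τ := by
    refine ⟨bA.repr w 0, bA.repr w 1, ?_⟩
    conv_lhs => rw [← bA.sum_repr w]
    rw [Fin.sum_univ_two, hb0, hb1]
  have hs : (2 * s) • (1 : A) = 0 := by
    rw [map_add, map_smul, map_smul, map_one, hconjτ] at hw
    rw [← hw, two_mul, add_smul]
    module
  rcases smul_eq_zero.mp hs with hs | h1
  · refine ⟨t, ?_⟩
    rw [(mul_eq_zero.mp hs).resolve_left h2, zero_smul, zero_add]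
  · exact absurd h1 (hb0 ▸ bA.ne_zero 0)

theorem add_conj_map_eq_of_norm_preserving {F : Type*} [FunLike F A A] [AddHomClass F A A]
    {v : F} (hN : ∀ x, v x * conj (v x) = x * conj x) (hv1 : v 1 = 1) (x : A) :
    v x + conj (v x) = x + conj x := by
  have h := hN (1 + x)
  rw [map_add, hv1, map_add, map_add, map_one] at h
  linear_combination h - hN x

theorem eq_id_or_eq_conj_of_norm_preserving (h2 : (2 : 𝕜) ≠ 0) (bA : Module.Basis (Fin 2) 𝕜 A)
    (hb0 : bA 0 = 1) (hb1 : bA 1 = τ) (hconjτ : conj τ = -τ) (hτ : IsUnit τ)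
    {v : A →ₗ[𝕜] A} (hN : ∀ x, v x * conj (v x) = x * conj x) (hv1 : v 1 = 1) :
    v = LinearMap.id ∨ v = conj.toLinearMap := by
  have : Nontrivial A := ⟨⟨1, 0, hb0 ▸ bA.ne_zero 0⟩⟩
  obtain ⟨t, ht⟩ := exists_eq_smul_of_add_conj_eq_zero h2 bA hb0 hb1 hconjτ
    (by rw [add_conj_map_eq_of_norm_preserving hN hv1, hconjτ, add_neg_cancel])
  have htt : t * t = 1 := by
    have hNτ : IsUnit (τ * conj τ) := by rw [hconjτ, mul_neg]; exact (hτ.mul hτ).neg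
    have h : (t * t - 1) • (τ * conj τ) = 0 := by
      rw [sub_smul, one_smul, ← smul_mul_smul_comm, ← map_smul, ← ht, hN, sub_self]
    exact sub_eq_zero.mp ((smul_eq_zero.mp h).resolve_right hNτ.ne_zero)
  rcases mul_self_eq_one_iff.mp htt with rfl | rfl
  · left
    refine bA.ext fun i => ?_
    fin_cases i <;> simp [hb0, hb1, hv1, ht]
  · right
    refine bA.ext fun i => ?_
    fin_cases i <;> simp [hb0, hb1, hv1, ht, hconjτ]

theorem exists_eq_mul_or_eq_mul_conj_of_norm_preserving (h2 : (2 : 𝕜) ≠ 0)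
    (bA : Module.Basis (Fin 2) 𝕜 A) (hb0 : bA 0 = 1) (hb1 : bA 1 = τ) (hconjτ : conj τ = -τ)
    (hτ : IsUnit τ) {F : Type*} [FunLike F A A] [LinearMapClass F 𝕜 A A] {u : F}
    (hN : ∀ x, u x * conj (u x) = x * conj x) :
    ∃ p : A, p * conj p = 1 ∧ ((∀ x, u x = p * x) ∨ ∀ x, u x = p * conj x) := by
  have hconj := involutive_of_basis_one_of_map_eq_neg bA hb0 hb1 hconjτ
  have hp : u 1 * conj (u 1) = 1 := by simpa using hN 1
  set v : A →ₗ[𝕜] A := LinearMap.mulLeft 𝕜 (conj (u 1)) ∘ₗ (u : A →ₗ[𝕜] A) with hv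
  have hvN : ∀ x, v x * conj (v x) = x * conj x := fun x => by
    simp only [hv, LinearMap.comp_apply, LinearMap.mulLeft_apply, LinearMap.coe_coe, map_mul,
      hconj (u 1)]
    linear_combination (u x * conj (u x)) * hp + hN x
  have hv1 : v 1 = 1 := by simpa [hv, mul_comm] using hp
  have hu : ∀ x, u x = u 1 * v x := fun x => by
    simp only [hv, LinearMap.comp_apply, LinearMap.mulLeft_apply, LinearMap.coe_coe]
    linear_combination -(u x) * hp
  refine ⟨u 1, hp, ?_⟩
  rcases eq_id_or_eq_conj_of_norm_preserving h2 bA hb0 hb1 hconjτ hτ hvN hv1 with h | h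
  · exact .inl fun x => by rw [hu x, h]; rfl
  · exact .inr fun x => by rw [hu x, h]; rfl

end IsometryClassification

section Intertwining

variable {R A : Type*} [CommSemiring R] [CommRing A] [Algebra R A] {conj : A ≃ₐ[R] A} {τ : A}

theorem eq_zero_of_forall_mul_add_mul_conj_eq_zero (hτ : IsUnit τ) (hconjτ : conj τ = -τ)
    (h2 : IsUnit (2 : A)) {α γ : A} (h : ∀ z, α * z + γ * conj z = 0) : α = 0 ∧ γ = 0 := by
  have h1 : α + γ = 0 := by simpa using h 1
  have hαγ : α = γ := by
    rw [← sub_eq_zero, ← hτ.mul_left_eq_zero, sub_mul]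
    simpa [hconjτ, sub_eq_add_neg] using h τ
  have hα : α = 0 := by
    rw [← h2.mul_right_eq_zero, two_mul]
    nth_rewrite 2 [hαγ]
    exact h1
  exact ⟨hα, hαγ ▸ hα⟩

theorem mul_left_intertwines_iff (hτ : IsUnit τ) (hconjτ : conj τ = -τ) (h2 : IsUnit (2 : A))
    {p a c a' c' : A} (hp : p * conj p = 1) :
    (∀ x y, p * (a * x * y + c * conj (x * y))
        = a' * (p * x) * (p * y) + c' * conj (p * x * (p * y))) ↔
      a' = conj p * a ∧ c' = p ^ 3 * c := by
  constructor
  · intro h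
    obtain ⟨ha, hc⟩ := eq_zero_of_forall_mul_add_mul_conj_eq_zero hτ hconjτ h2
      (α := p * a - a' * p ^ 2) (γ := p * c - c' * conj p ^ 2) fun z => by
        have := h z 1
        simp only [mul_one, map_mul] at this
        linear_combination this
    constructor
    · linear_combination (-conj p ^ 2) * ha + (conj p * a - a' * (p * conj p + 1)) * hp
    · linear_combination (-p ^ 2) * hc - c' * (p * conj p + 1) * hp
  · rintro ⟨rfl, rfl⟩ x y
    simp only [map_mul]
    linear_combination (-(a * x * y * p) - c * conj x * conj y * p * (1 + p * conj p)) * hp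

theorem mul_conj_intertwines_iff (hτ : IsUnit τ) (hconjτ : conj τ = -τ) (h2 : IsUnit (2 : A))
    (hconj : Involutive conj) {p a c a' c' : A} (hp : p * conj p = 1) :
    (∀ x y, p * conj (a * x * y + c * conj (x * y))
        = a' * (p * conj x) * (p * conj y) + c' * conj (p * conj x * (p * conj y))) ↔
      a' = conj p * conj a ∧ c' = p ^ 3 * conj c := by
  rw [← mul_left_intertwines_iff hτ hconjτ h2 hp]
  refine ⟨fun h x y => ?_, fun h x y => ?_⟩ <;> simpa [hconj _] using h (conj x) (conj y)

end Intertwining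

theorem stmt_9_general (𝕜 A : Type*) [Field 𝕜] (h2 : (2 : 𝕜) ≠ 0)
    [CommRing A] [Algebra 𝕜 A]
    (τ : A) (β : 𝕜) (hβ : β ≠ 0) (hτ : τ * τ = algebraMap 𝕜 A (-β))
    (bA : Module.Basis (Fin 2) 𝕜 A) (hb0 : bA 0 = 1) (hb1 : bA 1 = τ)
    (conj : A ≃ₐ[𝕜] A) (hconjτ : conj τ = -τ)
    (a c a' c' : A) :
    (∃ u : A ≃ₗ[𝕜] A, (∀ x : A, u x * conj (u x) = x * conj x) ∧
        ∀ x y : A, u (a * x * y + c * conj (x * y))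
          = a' * u x * u y + c' * conj (u x * u y)) ↔
      ∃ l : A, l * conj l = 1 ∧
        ((a' = conj l * a ∧ c' = l ^ 3 * c) ∨
         (a' = conj l * conj a ∧ c' = l ^ 3 * conj c)) := by
  have hτu : IsUnit τ := isUnit_of_mul_isUnit_left (hτ ▸ (neg_ne_zero.2 hβ).isUnit.map _)
  have h2u : IsUnit (2 : A) := map_ofNat (algebraMap 𝕜 A) 2 ▸ h2.isUnit.map (algebraMap 𝕜 A)
  have hconj := involutive_of_basis_one_of_map_eq_neg bA hb0 hb1 hconjτ
  constructor
  · rintro ⟨u, hN, hF⟩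
    obtain ⟨p, hp, hu | hu⟩ :=
      exists_eq_mul_or_eq_mul_conj_of_norm_preserving h2 bA hb0 hb1 hconjτ hτu hN
    · simp only [hu] at hF
      exact ⟨p, hp, .inl ((mul_left_intertwines_iff hτu hconjτ h2u hp).1 hF)⟩
    · simp only [hu] at hF
      exact ⟨p, hp, .inr ((mul_conj_intertwines_iff hτu hconjτ h2u hconj hp).1 hF)⟩
  · rintro ⟨l, hl, ⟨rfl, rfl⟩ | ⟨rfl, rfl⟩⟩ <;>
      obtain ⟨p, rfl⟩ := IsUnit.of_mul_eq_one (conj l) hl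
    · refine ⟨p.mulLeftLinearEquiv 𝕜 A, fun x => ?_,
        (mul_left_intertwines_iff hτu hconjτ h2u hl).2 ⟨rfl, rfl⟩⟩
      simp only [Units.mulLeftLinearEquiv_apply, map_mul]
      linear_combination (x * conj x) * hl
    · refine ⟨conj.toLinearEquiv.trans (p.mulLeftLinearEquiv 𝕜 A), fun x => ?_,
        (mul_conj_intertwines_iff hτu hconjτ h2u hconj hl).2 ⟨rfl, rfl⟩⟩
      simp only [LinearEquiv.trans_apply, AlgEquiv.toLinearEquiv_apply,
        Units.mulLeftLinearEquiv_apply, map_mul, hconj x]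
      linear_combination (x * conj x) * hl

/-- in the model `A` of `C₀(-q)`, two maps
`F_{ac}(x,y) = a·x·y + c·(x·y)‾` and `F_{a'c'}` with
`N(c) - N(a) = 1 = N(c') - N(a')` are isomorphic under the isometry group of
`(A, N)` (linear bijections preserving the norm `N x = x·x̄`) if and only if
there is `λ` with `N(λ) = 1` and `(a',c') = (λ⁻¹a, λ³c)` or
`(a',c') = (λ⁻¹ā, λ³c̄)` (note `λ⁻¹ = λ̄`). -/
theorem stmt_9 (𝕜 A : Type*) [Field 𝕜] (h2 : (2 : 𝕜) ≠ 0) (h3 : (3 : 𝕜) ≠ 0)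
    [CommRing A] [Algebra 𝕜 A]
    (τ : A) (β : 𝕜) (hβ : β ≠ 0) (hτ : τ * τ = algebraMap 𝕜 A (-β))
    (bA : Module.Basis (Fin 2) 𝕜 A) (hb0 : bA 0 = 1) (hb1 : bA 1 = τ)
    (conj : A ≃ₐ[𝕜] A) (hconjτ : conj τ = -τ)
    (a c a' c' : A)
    (hac : c * conj c - a * conj a = 1)
    (hac' : c' * conj c' - a' * conj a' = 1) :
    (∃ u : A ≃ₗ[𝕜] A, (∀ x : A, u x * conj (u x) = x * conj x) ∧
        ∀ x y : A, u (a * x * y + c * conj (x * y))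
          = a' * u x * u y + c' * conj (u x * u y)) ↔
      ∃ l : A, l * conj l = 1 ∧
        ((a' = conj l * a ∧ c' = l ^ 3 * c) ∨
         (a' = conj l * conj a ∧ c' = l ^ 3 * conj c)) :=
  stmt_9_general 𝕜 A h2 τ β hβ hτ bA hb0 hb1 conj hconjτ a c a' c'
end

section
/- Let F_{ac}(x,y) = a·x·y + c·(x·y)‾ on C₀(-q) with N(c) - N(a) = 1. If N(a) ≠ 0 and c·a³ ∈ F·1, then the isotropy subgroup of F_{ac} in the isometry group of N is {id, ψ_{ā/a}}, where ψ_λ(x) = λx̄. -/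
/-!
An isometry of the norm `N(x) = x x̄` of a two-dimensional algebra `𝕜 ⊕ 𝕜τ` sends `1` to some `l`
with `N(l) = 1` and `τ` to `± τ l` (polarize `N` and use that `N(τ) ≠ 0`), so it is `x ↦ l x` or
`x ↦ l x̄`. The maps `id` and `conj` are linearly independent over `A`, so comparing coefficients
in `u (F_{ac}(x, 1)) = F_{ac}(u x, u 1)` reduces invariance of `F_{ac}` to two identities in `l`:
for `x ↦ l x` they force `l = 1`, for `x ↦ l x̄` they say `a l = ā` together with
`l c̄ = c l̄²`, and the latter is `conj (c a³) = c a³` after multiplying by `a ā²`.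
-/

section Fac

variable {A S : Type*} [CommRing A] [FunLike S A A] [RingHomClass S A A]

/-- The form `F_{ac}(x, y) = a x y + c (x y)‾`, for the involution `σ`. -/
def Fac (σ : S) (a c x y : A) : A := a * x * y + c * σ (x * y)

theorem eq_zero_and_eq_zero_of_forall_mul_add_mul_map_eq_zero (σ : S) {τ p q : A}
    (hτ : IsUnit τ) (hστ : σ τ = -τ) (h2 : IsUnit (2 : A))
    (h : ∀ z, p * z + q * σ z = 0) : p = 0 ∧ q = 0 := by
  have h1 := h 1
  have hτ' := h τ
  rw [map_one, mul_one, mul_one] at h1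
  rw [hστ] at hτ'
  have hpq : p - q = 0 := hτ.mul_right_cancel (by linear_combination hτ')
  have hp : p = 0 := h2.mul_left_cancel (by linear_combination h1 + hpq)
  exact ⟨hp, by linear_combination h1 - hp⟩

variable (σ : S) {τ : A} (hτ : IsUnit τ) (hστ : σ τ = -τ) (h2 : IsUnit (2 : A))
include hτ hστ h2

theorem forall_mul_Fac_eq_iff (a c l : A) :
    (∀ x y, l * Fac σ a c x y = Fac σ a c (l * x) (l * y)) ↔
      l * a = a * l ^ 2 ∧ l * c = c * σ l ^ 2 := by
  constructor
  · intro h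
    have hcoeff := eq_zero_and_eq_zero_of_forall_mul_add_mul_map_eq_zero σ hτ hστ h2
      (p := l * a - a * l ^ 2) (q := l * c - c * σ l ^ 2) fun z => by
        have hz := h z 1
        simp only [Fac, map_mul, mul_one] at hz
        linear_combination hz
    exact ⟨sub_eq_zero.1 hcoeff.1, sub_eq_zero.1 hcoeff.2⟩
  · rintro ⟨ha, hc⟩ x y
    simp only [Fac, map_mul]
    linear_combination (x * y) * ha + σ x * σ y * hc

theorem forall_mul_map_Fac_eq_iff (hσ : ∀ x, σ (σ x) = x) (a c l : A) :
    (∀ x y, l * σ (Fac σ a c x y) = Fac σ a c (l * σ x) (l * σ y)) ↔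
      l * σ a = a * l ^ 2 ∧ l * σ c = c * σ l ^ 2 := by
  constructor
  · intro h
    have hcoeff := eq_zero_and_eq_zero_of_forall_mul_add_mul_map_eq_zero σ hτ hστ h2
      (p := l * σ c - c * σ l ^ 2) (q := l * σ a - a * l ^ 2) fun z => by
        have hz := h z 1
        simp only [Fac, map_mul, map_add, map_one, hσ, mul_one] at hz
        linear_combination hz
    exact ⟨sub_eq_zero.1 hcoeff.2, sub_eq_zero.1 hcoeff.1⟩
  · rintro ⟨ha, hc⟩ x y
    simp only [Fac, map_mul, map_add, hσ]
    linear_combination σ x * σ y * ha + (x * y) * hc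

end Fac

section Reflection

variable {A S : Type*} [CommRing A] [FunLike S A A] [RingHomClass S A A] {σ : S}
  (hσ : ∀ x, σ (σ x) = x) {a l : A} (hal : a * l = σ a)
include hσ hal

theorem mul_map_eq_one_of_mul_eq_map (ha : IsUnit (a * σ a)) : l * σ l = 1 := by
  have hal' : σ a * σ l = a := by rw [← map_mul, hal, hσ]
  exact ha.mul_left_cancel (by linear_combination (σ a * σ l) * hal + σ a * hal')

theorem mul_map_eq_of_mul_eq_map (ha : IsUnit a) {c : A} (hc : σ (c * a ^ 3) = c * a ^ 3) :
    l * σ c = c * σ l ^ 2 := by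
  have hal' : σ a * σ l = a := by rw [← map_mul, hal, hσ]
  have hunit : IsUnit (a * σ a ^ 2) := ha.mul ((ha.map σ).pow 2)
  simp only [map_mul, map_pow] at hc
  refine hunit.mul_left_cancel ?_
  linear_combination (σ a ^ 2 * σ c) * hal + hc - (c * a * (σ a * σ l + a)) * hal'

end Reflection

theorem eq_one_of_mul_eq_mul_sq {M : Type*} [CommMonoid M] {a l : M} (ha : IsUnit a)
    (hl : IsUnit l) (h : l * a = a * l ^ 2) : l = 1 :=
  hl.mul_left_cancel (ha.mul_left_cancel (by rw [mul_one, ← pow_two, ← h, mul_comm]))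

theorem mul_eq_map_of_mul_map_eq_mul_sq {A S : Type*} [CommRing A] [FunLike S A A] {σ : S}
    {a l : A} (hl : l * σ l = 1) (h : l * σ a = a * l ^ 2) : a * l = σ a := by
  linear_combination -σ l * h + (σ a - a * l) * hl

section BinaryAlgebra

variable {𝕜 A : Type*} [Field 𝕜] [CommRing A] [Algebra 𝕜 A] {τ : A}
  {bA : Module.Basis (Fin 2) 𝕜 A} (hb0 : bA 0 = 1) (hb1 : bA 1 = τ)
  {conj : A ≃ₐ[𝕜] A} (hconjτ : conj τ = -τ)
include hb0 hb1

theorem exists_eq_smul_one_add_smul (z : A) : ∃ s t : 𝕜, z = s • (1 : A) + t • τ := by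
  refine ⟨bA.repr z 0, bA.repr z 1, ?_⟩
  have h := bA.sum_repr z
  rw [Fin.sum_univ_two, hb0, hb1] at h
  exact h.symm

include hconjτ

theorem conj_conj_of_conj_eq_neg (z : A) : conj (conj z) = z := by
  obtain ⟨s, t, rfl⟩ := exists_eq_smul_one_add_smul hb0 hb1 z
  simp only [map_add, map_smul, map_one, hconjτ, map_neg, neg_neg]

variable (h2 : (2 : 𝕜) ≠ 0)
include h2

theorem exists_eq_algebraMap_of_conj_eq {z : A} (hz : conj z = z) :
    ∃ s : 𝕜, z = algebraMap 𝕜 A s := by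
  obtain ⟨s, t, rfl⟩ := exists_eq_smul_one_add_smul hb0 hb1 z
  simp only [map_add, map_smul, map_one, hconjτ] at hz
  have ht : (2 * t) • τ = 0 := by rw [mul_smul]; linear_combination (norm := module) -hz
  have ht0 : t = 0 := by
    simpa [h2, hb1 ▸ bA.ne_zero 1] using ht
  exact ⟨s, by simp [ht0, Algebra.smul_def]⟩

theorem exists_eq_smul_of_conj_eq_neg {z : A} (hz : conj z = -z) : ∃ t : 𝕜, z = t • τ := by
  obtain ⟨s, t, rfl⟩ := exists_eq_smul_one_add_smul hb0 hb1 z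
  simp only [map_add, map_smul, map_one, hconjτ] at hz
  have hs : (2 * s) • (1 : A) = 0 := by rw [mul_smul]; linear_combination (norm := module) hz
  have hs0 : s = 0 := by
    simpa [h2, hb0 ▸ bA.ne_zero 0] using hs
  exact ⟨t, by simp [hs0]⟩

theorem isUnit_mul_conj_of_ne_zero {a : A} (ha : a * conj a ≠ 0) : IsUnit (a * conj a) := by
  obtain ⟨s, hs⟩ := exists_eq_algebraMap_of_conj_eq hb0 hb1 hconjτ h2
    (z := a * conj a) (by rw [map_mul, conj_conj_of_conj_eq_neg hb0 hb1 hconjτ, mul_comm])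
  rw [hs] at ha ⊢
  exact (IsUnit.mk0 s fun h => ha (by rw [h, map_zero])).map (algebraMap 𝕜 A)

theorem exists_mul_or_mul_conj_of_isometry {β : 𝕜} (hβ : β ≠ 0)
    (hτ : τ * τ = algebraMap 𝕜 A (-β)) (u : A →ₗ[𝕜] A)
    (hu : ∀ x, u x * conj (u x) = x * conj x) :
    ∃ l : A, l * conj l = 1 ∧ ((∀ x, u x = l * x) ∨ ∀ x, u x = l * conj x) := by
  rw [map_neg] at hτ
  have polar : ∀ x y, u x * conj (u y) + u y * conj (u x) = x * conj y + y * conj x := by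
    intro x y
    have h := hu (x + y)
    simp only [map_add] at h
    linear_combination h - hu x - hu y
  set l := u 1
  set m := u τ
  have hl : l * conj l = 1 := by simpa using hu 1
  have hm : m * conj m = algebraMap 𝕜 A β := by
    rw [hu, hconjτ]; linear_combination -hτ
  have hlm : l * conj m + m * conj l = 0 := by
    simpa [hconjτ, mul_comm τ] using polar 1 τ
  obtain ⟨t, ht⟩ := exists_eq_smul_of_conj_eq_neg hb0 hb1 hconjτ h2 (z := m * conj l) (by
    rw [map_mul, conj_conj_of_conj_eq_neg hb0 hb1 hconjτ]; linear_combination hlm)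
  have hm' : m = t • τ * l := by linear_combination -m * hl + l * ht
  have ht2 : t ^ 2 = 1 := by
    have h : algebraMap 𝕜 A (t ^ 2 * β) = algebraMap 𝕜 A β := by
      rw [← hm, hm']
      simp only [map_mul, map_pow, hconjτ, Algebra.smul_def, AlgEquiv.commutes]
      linear_combination (algebraMap 𝕜 A t ^ 2 * l * conj l) * hτ
        - algebraMap 𝕜 A t ^ 2 * algebraMap 𝕜 A β * hl
    have : Nontrivial A := ⟨1, 0, hb0 ▸ bA.ne_zero 0⟩
    simpa [hβ] using (algebraMap 𝕜 A).injective h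
  refine ⟨l, hl, ?_⟩
  rcases sq_eq_one_iff.1 ht2 with rfl | rfl
  · refine Or.inl fun x => LinearMap.congr_fun (bA.ext (f₂ := LinearMap.mulLeft 𝕜 l) ?_) x
    intro i
    fin_cases i
    · simp [hb0, l]
    · simpa [hb1, mul_comm] using hm'
  · refine Or.inr fun x =>
      LinearMap.congr_fun (bA.ext (f₂ := LinearMap.mulLeft 𝕜 l ∘ₗ conj.toLinearMap) ?_) x
    intro i
    fin_cases i
    · simp [hb0, l]
    · simp [hb1, hconjτ, m, hm', mul_comm]

end BinaryAlgebra

theorem stmt_13_general (𝕜 A : Type*) [Field 𝕜] (h2 : (2 : 𝕜) ≠ 0)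
    [CommRing A] [Algebra 𝕜 A]
    (τ : A) (β : 𝕜) (hβ : β ≠ 0) (hτ : τ * τ = algebraMap 𝕜 A (-β))
    (bA : Module.Basis (Fin 2) 𝕜 A) (hb0 : bA 0 = 1) (hb1 : bA 1 = τ)
    (conj : A ≃ₐ[𝕜] A) (hconjτ : conj τ = -τ)
    (a c : A)
    (hNa : a * conj a ≠ 0)
    (hca : ∃ t : 𝕜, c * a ^ 3 = algebraMap 𝕜 A t)
    (u : A ≃ₗ[𝕜] A) :
    ((∀ x : A, u x * conj (u x) = x * conj x) ∧
      (∀ x y : A, u (a * x * y + c * conj (x * y))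
        = a * u x * u y + c * conj (u x * u y))) ↔
      (u = LinearEquiv.refl 𝕜 A ∨ ∀ x : A, a * u x = conj a * conj x) := by
  have hconj := conj_conj_of_conj_eq_neg hb0 hb1 hconjτ
  have hτu : IsUnit τ := isUnit_of_mul_isUnit_left (x := τ) (y := τ) <| by
    rw [hτ]; exact (IsUnit.mk0 _ (neg_ne_zero.2 hβ)).map (algebraMap 𝕜 A)
  have h2u : IsUnit (2 : A) := by
    simpa only [map_ofNat] using (IsUnit.mk0 _ h2).map (algebraMap 𝕜 A)
  have hNau := isUnit_mul_conj_of_ne_zero hb0 hb1 hconjτ h2 hNa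
  have hau : IsUnit a := isUnit_of_mul_isUnit_left hNau
  constructor
  · rintro ⟨hN, hF⟩
    obtain ⟨l, hl, hu⟩ :=
      exists_mul_or_mul_conj_of_isometry hb0 hb1 hconjτ h2 hβ hτ u.toLinearMap hN
    simp only [LinearEquiv.coe_coe] at hu
    rcases hu with hu | hu
    · simp only [hu] at hF
      have hla := ((forall_mul_Fac_eq_iff conj hτu hconjτ h2u a c l).1 hF).1
      have hl1 := eq_one_of_mul_eq_mul_sq hau (IsUnit.of_mul_eq_one _ hl) hla
      exact Or.inl (LinearEquiv.ext fun x => by simp [hu, hl1])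
    · simp only [hu] at hF
      have hla := ((forall_mul_map_Fac_eq_iff conj hτu hconjτ h2u hconj a c l).1 hF).1
      exact Or.inr fun x => by rw [hu, ← mul_assoc, mul_eq_map_of_mul_map_eq_mul_sq hl hla]
  · rintro (rfl | hψ)
    · exact ⟨fun _ => rfl, fun _ _ => rfl⟩
    obtain ⟨l, hal⟩ : ∃ l, a * l = conj a := ⟨u 1, by simpa using hψ 1⟩
    have hu : ∀ x, u x = l * conj x :=
      fun x => hau.mul_left_cancel (by rw [hψ, ← mul_assoc, hal])
    have hca' : conj (c * a ^ 3) = c * a ^ 3 := by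
      obtain ⟨t, ht⟩ := hca
      rw [ht, AlgEquiv.commutes]
    refine ⟨fun x => ?_, fun x y => ?_⟩
    · rw [hu, map_mul, hconj]
      linear_combination (x * conj x) * mul_map_eq_one_of_mul_eq_map hconj hal hNau
    · simp only [hu]
      exact (forall_mul_map_Fac_eq_iff conj hτu hconjτ h2u hconj a c l).2
        ⟨by linear_combination -l * hal, mul_map_eq_of_mul_eq_map hconj hal hau hca'⟩ x y

/-- in the model `A` of `C₀(-q)`, let
`F_{ac}(x,y) = a·x·y + c·(x·y)‾` with `N(c) - N(a) = 1`.  If `N(a) ≠ 0` and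
`c·a³ ∈ 𝕜·1`, then the isotropy subgroup of `F_{ac}` in the isometry group of
`N` is `{id, ψ_{ā/a}}`; since `a` is invertible (`a⁻¹ = ā/N(a)`), the map
`ψ_{ā/a}(x) = (ā/a)·x̄` is characterized by `a · u x = ā · x̄`. -/
theorem stmt_13 (𝕜 A : Type*) [Field 𝕜] (h2 : (2 : 𝕜) ≠ 0) (h3 : (3 : 𝕜) ≠ 0)
    [CommRing A] [Algebra 𝕜 A]
    (τ : A) (β : 𝕜) (hβ : β ≠ 0) (hτ : τ * τ = algebraMap 𝕜 A (-β))
    (bA : Module.Basis (Fin 2) 𝕜 A) (hb0 : bA 0 = 1) (hb1 : bA 1 = τ)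
    (conj : A ≃ₐ[𝕜] A) (hconjτ : conj τ = -τ)
    (a c : A) (hac : c * conj c - a * conj a = 1)
    (hNa : a * conj a ≠ 0)
    (hca : ∃ t : 𝕜, c * a ^ 3 = algebraMap 𝕜 A t)
    (u : A ≃ₗ[𝕜] A) :
    ((∀ x : A, u x * conj (u x) = x * conj x) ∧
      (∀ x y : A, u (a * x * y + c * conj (x * y))
        = a * u x * u y + c * conj (u x * u y))) ↔
      (u = LinearEquiv.refl 𝕜 A ∨ ∀ x : A, a * u x = conj a * conj x) :=
  stmt_13_general 𝕜 A h2 τ β hβ hτ bA hb0 hb1 conj hconjτ a c hNa hca u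
end

section
/- The invariants J₁, J₂ of F_{ac} determine and are determined by the pair (N(a), K(a,c)): solving J₁ = 27(K + 2N(a)² + 3N(a))/D and J₂ = 27(K + 2N(a)²)/D with D = 4K + 8N(a)² + 36N(a) + 27 yields K = -27(6J₁² - 2J₂² - 27J₂)/(12J₁ - 8J₂ - 27)² and N(a) = 9(J₂ - J₁)/(12J₁ - 8J₂ - 27), whenever 12J₁ - 8J₂ - 27 ≠ 0. -/
/-! Clearing the denominator `D = 4K + 8n² + 36n + 27`, the relations become linear in `J₁ D`
and `J₂ D`, and the combinations `(12J₁ - 8J₂ - 27) D = -729` and `(J₂ - J₁) D = -81n` are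
constants resp. multiples of `n`. Hence `D = -729 / (12J₁ - 8J₂ - 27)`, which gives `n`, and then
`27K = J₂ D - 54n²` gives `K`. -/

section InvariantsInversion

variable {R : Type*} [CommRing R] {K n J₁ J₂ : R}

theorem invariants_denom_mul_eq
    (hJ₁ : J₁ * (4 * K + 8 * n ^ 2 + 36 * n + 27) = 27 * (K + 2 * n ^ 2 + 3 * n))
    (hJ₂ : J₂ * (4 * K + 8 * n ^ 2 + 36 * n + 27) = 27 * (K + 2 * n ^ 2)) :
    (12 * J₁ - 8 * J₂ - 27) * (4 * K + 8 * n ^ 2 + 36 * n + 27) = -729 := by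
  linear_combination 12 * hJ₁ - 8 * hJ₂

theorem invariants_sub_mul_eq
    (hJ₁ : J₁ * (4 * K + 8 * n ^ 2 + 36 * n + 27) = 27 * (K + 2 * n ^ 2 + 3 * n))
    (hJ₂ : J₂ * (4 * K + 8 * n ^ 2 + 36 * n + 27) = 27 * (K + 2 * n ^ 2)) :
    (J₂ - J₁) * (4 * K + 8 * n ^ 2 + 36 * n + 27) = -81 * n := by
  linear_combination hJ₂ - hJ₁

variable [IsDomain R]

theorem invariants_n_mul_eq (hD : 4 * K + 8 * n ^ 2 + 36 * n + 27 ≠ 0)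
    (hJ₁ : J₁ * (4 * K + 8 * n ^ 2 + 36 * n + 27) = 27 * (K + 2 * n ^ 2 + 3 * n))
    (hJ₂ : J₂ * (4 * K + 8 * n ^ 2 + 36 * n + 27) = 27 * (K + 2 * n ^ 2)) :
    n * (12 * J₁ - 8 * J₂ - 27) = 9 * (J₂ - J₁) := by
  refine mul_right_cancel₀ hD ?_
  linear_combination n * invariants_denom_mul_eq hJ₁ hJ₂ - 9 * invariants_sub_mul_eq hJ₁ hJ₂

theorem invariants_K_mul_sq_eq (hD : 4 * K + 8 * n ^ 2 + 36 * n + 27 ≠ 0)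
    (hJ₁ : J₁ * (4 * K + 8 * n ^ 2 + 36 * n + 27) = 27 * (K + 2 * n ^ 2 + 3 * n))
    (hJ₂ : J₂ * (4 * K + 8 * n ^ 2 + 36 * n + 27) = 27 * (K + 2 * n ^ 2)) :
    K * (12 * J₁ - 8 * J₂ - 27) ^ 2 = -27 * (6 * J₁ ^ 2 - 2 * J₂ ^ 2 - 27 * J₂) := by
  set D := 4 * K + 8 * n ^ 2 + 36 * n + 27
  set e := 12 * J₁ - 8 * J₂ - 27
  refine mul_right_cancel₀ (pow_ne_zero 2 hD) ?_
  -- `-27 (6J₁² - 2J₂² - 27J₂) = -27 J₂ e - 162 (J₂ - J₁)²`, so after multiplying by `D²`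
  -- only the products `e D`, `(J₂ - J₁) D` and `J₂ D` occur.
  linear_combination (K * (e * D - 729) + 27 * J₂ * D) * invariants_denom_mul_eq hJ₁ hJ₂
    + 162 * ((J₂ - J₁) * D - 81 * n) * invariants_sub_mul_eq hJ₁ hJ₂ - 19683 * hJ₂

end InvariantsInversion

theorem stmt_16_general (𝕜 : Type*) [Field 𝕜]
    (K n J₁ J₂ : 𝕜)
    (hD : 4 * K + 8 * n ^ 2 + 36 * n + 27 ≠ 0)
    (hJ1 : J₁ = 27 * (K + 2 * n ^ 2 + 3 * n) / (4 * K + 8 * n ^ 2 + 36 * n + 27))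
    (hJ2 : J₂ = 27 * (K + 2 * n ^ 2) / (4 * K + 8 * n ^ 2 + 36 * n + 27))
    (hden : 12 * J₁ - 8 * J₂ - 27 ≠ 0) :
    K = -27 * (6 * J₁ ^ 2 - 2 * J₂ ^ 2 - 27 * J₂) / (12 * J₁ - 8 * J₂ - 27) ^ 2 ∧
    n = 9 * (J₂ - J₁) / (12 * J₁ - 8 * J₂ - 27) := by
  rw [eq_div_iff hD] at hJ1 hJ2
  rw [eq_div_iff (pow_ne_zero 2 hden), eq_div_iff hden]
  exact ⟨invariants_K_mul_sq_eq hD hJ1 hJ2, invariants_n_mul_eq hD hJ1 hJ2⟩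

/-- the invariants `J₁, J₂` determine `(N(a), K)`: if
`J₁ = 27(K + 2n² + 3n)/D` and `J₂ = 27(K + 2n²)/D` with
`D = 4K + 8n² + 36n + 27 ≠ 0`, and `12J₁ - 8J₂ - 27 ≠ 0`, then
`K = -27(6J₁² - 2J₂² - 27J₂)/(12J₁ - 8J₂ - 27)²` and
`n = 9(J₂ - J₁)/(12J₁ - 8J₂ - 27)`. -/
theorem stmt_16 (𝕜 : Type*) [Field 𝕜] (h2 : (2 : 𝕜) ≠ 0) (h3 : (3 : 𝕜) ≠ 0)
    (K n J₁ J₂ : 𝕜)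
    (hD : 4 * K + 8 * n ^ 2 + 36 * n + 27 ≠ 0)
    (hJ1 : J₁ = 27 * (K + 2 * n ^ 2 + 3 * n) / (4 * K + 8 * n ^ 2 + 36 * n + 27))
    (hJ2 : J₂ = 27 * (K + 2 * n ^ 2) / (4 * K + 8 * n ^ 2 + 36 * n + 27))
    (hden : 12 * J₁ - 8 * J₂ - 27 ≠ 0) :
    K = -27 * (6 * J₁ ^ 2 - 2 * J₂ ^ 2 - 27 * J₂) / (12 * J₁ - 8 * J₂ - 27) ^ 2 ∧
    n = 9 * (J₂ - J₁) / (12 * J₁ - 8 * J₂ - 27) :=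
  stmt_16_general 𝕜 K n J₁ J₂ hD hJ1 hJ2 hden
end

section
/- Let F_{ac}, F_{a'c'} be maps on C₀(-q) with N(c) - N(a) = 1 = N(c') - N(a') and a = 0. If N(a') = N(a) and K(a',c') = K(a,c), then a' = 0, and F_{ac} is equivalent to F_{a'c'} under the isometry group of N if and only if c'/c or c'/c̄ is a cube in C₀(-q). -/
/-!
With `a = 0` the hypotheses reduce to `N(a') = 0`, `K(a', c') = 0` and `N(c') = 1`; multiplying
`K(a', c')` by `a'³c'` gives `a'⁶c'² = -N(a')³ = 0`, hence `a'⁶ = 0`, and `C₀(-q) ≅ 𝕜[τ]/(τ² + β)`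
is reduced, so `a' = 0`. The equivalence then concerns `c'` alone, and a cube root of `c'/c` or
`c'/c̄` is corrected by its norm, a cube root of unity, into a cube root of norm one.
-/

section QuadraticAlgebra

variable {𝕜 A : Type*} [Field 𝕜] [CommRing A] [Algebra 𝕜 A]

lemma exists_eq_algebraMap_add_algebraMap_mul (bA : Module.Basis (Fin 2) 𝕜 A) (hb0 : bA 0 = 1)
    (s : A) : ∃ x y : 𝕜, s = algebraMap 𝕜 A x + algebraMap 𝕜 A y * bA 1 := by
  refine ⟨bA.repr s 0, bA.repr s 1, ?_⟩
  have h := bA.sum_repr s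
  rw [Fin.sum_univ_two, hb0, Algebra.smul_def, Algebra.smul_def, mul_one] at h
  exact h.symm

/-- `𝕜[τ]/(τ² + β)` is reduced when `2β ≠ 0`: `(x + yτ)² = 0` forces `2xy = 0` and `x² = βy²`. -/
lemma isReduced_of_basis_sq_eq (h2 : (2 : 𝕜) ≠ 0) {β : 𝕜} (hβ : β ≠ 0)
    (bA : Module.Basis (Fin 2) 𝕜 A) (hb0 : bA 0 = 1)
    (hτ : bA 1 * bA 1 = algebraMap 𝕜 A (-β)) : IsReduced A := by
  rw [isReduced_iff_pow_one_lt 2 one_lt_two]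
  intro s hs
  obtain ⟨x, y, rfl⟩ := exists_eq_algebraMap_add_algebraMap_mul bA hb0 s
  have hli : LinearIndependent 𝕜 ![(1 : A), bA 1] := by
    convert bA.linearIndependent
    ext i
    fin_cases i <;> simp [hb0]
  obtain ⟨h0, h1⟩ := LinearIndependent.pair_iff.mp hli (x ^ 2 - β * y ^ 2) (2 * x * y) (by
    simp only [Algebra.smul_def, map_sub, map_mul, map_pow, map_ofNat, mul_one]
    rw [map_neg] at hτ
    linear_combination hs - algebraMap 𝕜 A y ^ 2 * hτ)
  have hxy : x * y = 0 := by simpa [h2] using h1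
  have hx : x = 0 := pow_eq_zero_iff (n := 4) (by norm_num) |>.mp
    (by linear_combination x ^ 2 * h0 + β * x * y * hxy)
  have hy : y = 0 := by simpa [hx, hβ] using h0
  simp [hx, hy]

lemma involutive_of_map_basis_eq_neg (bA : Module.Basis (Fin 2) 𝕜 A) (hb0 : bA 0 = 1)
    (conj : A ≃ₐ[𝕜] A) (hconj : conj (bA 1) = -bA 1) : Function.Involutive conj := by
  intro w
  obtain ⟨x, y, rfl⟩ := exists_eq_algebraMap_add_algebraMap_mul bA hb0 w
  simp [hconj]

end QuadraticAlgebra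

section Norm

variable {R F : Type*} [CommRing R] [FunLike F R R] [MonoidHomClass F R R]

lemma eq_zero_of_mul_eq_zero_of_pow_three_mul_add_eq_zero [IsReduced R] {a b c d : R}
    (hcd : c * d = 1) (hab : a * b = 0) (hK : a ^ 3 * c + b ^ 3 * d = 0) : a = 0 := by
  have h6 : a ^ 6 = 0 := by
    linear_combination (a ^ 3 * c * d ^ 2) * hK - (a ^ 2 * b ^ 2 * d ^ 2) * hab
      - (a ^ 3 * b ^ 3 * d ^ 2 + a ^ 6 * c * d + a ^ 6) * hcd
  exact IsNilpotent.eq_zero ⟨6, h6⟩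

/-- Here `N(z)³ = 1`, so `λ = z² σ(z)` has norm `N(z)³ = 1` and `λ³ = z³ N(z)³ = z³`. -/
lemma exists_norm_eq_one_of_eq_pow_three_mul {σ : F} (hσ : Function.Involutive σ) {c c' z : R}
    (hc : c * σ c = 1) (hc' : c' * σ c' = 1) (hz : c' = z ^ 3 * c) :
    ∃ l : R, l * σ l = 1 ∧ c' = l ^ 3 * c := by
  have hσz : σ c' = σ z ^ 3 * σ c := by rw [hz, map_mul, map_pow]
  have hn : (z * σ z) ^ 3 = 1 := by
    linear_combination hc' - c' * hσz - σ z ^ 3 * σ c * hz - z ^ 3 * σ z ^ 3 * hc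
  refine ⟨z ^ 2 * σ z, ?_, ?_⟩
  · rw [map_mul, map_pow, hσ z]
    linear_combination hn
  · linear_combination hz - z ^ 3 * c * hn

end Norm

theorem stmt_18_general (𝕜 A : Type*) [Field 𝕜] (h2 : (2 : 𝕜) ≠ 0)
    [CommRing A] [Algebra 𝕜 A]
    (τ : A) (β : 𝕜) (hβ : β ≠ 0) (hτ : τ * τ = algebraMap 𝕜 A (-β))
    (bA : Module.Basis (Fin 2) 𝕜 A) (hb0 : bA 0 = 1) (hb1 : bA 1 = τ)
    (conj : A ≃ₐ[𝕜] A) (hconjτ : conj τ = -τ)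
    (a c a' c' : A)
    (hac : c * conj c - a * conj a = 1)
    (hac' : c' * conj c' - a' * conj a' = 1)
    (ha : a = 0)
    (hN : a' * conj a' = a * conj a)
    (hK : a' ^ 3 * c' + (conj a') ^ 3 * conj c' = a ^ 3 * c + (conj a) ^ 3 * conj c) :
    a' = 0 ∧
    ((∃ l : A, l * conj l = 1 ∧
        ((a' = conj l * a ∧ c' = l ^ 3 * c) ∨
         (a' = conj l * conj a ∧ c' = l ^ 3 * conj c))) ↔
      ∃ z : A, c' = z ^ 3 * c ∨ c' = z ^ 3 * conj c) := by
  subst hb1 ha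
  have hinv := involutive_of_map_basis_eq_neg bA hb0 conj hconjτ
  have := isReduced_of_basis_sq_eq h2 hβ bA hb0 hτ
  have hN0 : a' * conj a' = 0 := by simpa using hN
  have hc : c * conj c = 1 := by simpa using hac
  have hc' : c' * conj c' = 1 := by simpa [hN0] using hac'
  have hc_conj : conj c * conj (conj c) = 1 := by rw [hinv, mul_comm, hc]
  have ha' : a' = 0 :=
    eq_zero_of_mul_eq_zero_of_pow_three_mul_add_eq_zero hc' hN0 (by simpa using hK)
  refine ⟨ha', ⟨?_, ?_⟩⟩
  · rintro ⟨l, -, ⟨-, hl⟩ | ⟨-, hl⟩⟩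
    exacts [⟨l, .inl hl⟩, ⟨l, .inr hl⟩]
  · rintro ⟨z, hz | hz⟩
    · obtain ⟨l, hl, hl'⟩ := exists_norm_eq_one_of_eq_pow_three_mul hinv hc hc' hz
      exact ⟨l, hl, .inl ⟨by simp [ha'], hl'⟩⟩
    · obtain ⟨l, hl, hl'⟩ := exists_norm_eq_one_of_eq_pow_three_mul hinv hc_conj hc' hz
      exact ⟨l, hl, .inr ⟨by simp [ha'], hl'⟩⟩

/-- in the model `A` of `C₀(-q)`, for `F_{ac}`, `F_{a'c'}` with
`N(c) - N(a) = 1 = N(c') - N(a')` and `a = 0`: if `N(a') = N(a)` and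
`K(a',c') = K(a,c)` (with `K(a,c) = a³c + ā³c̄`), then `a' = 0`, and `F_{ac}`
is equivalent to `F_{a'c'}` under the isometry group of `N` (i.e.
`(a',c') = (λ⁻¹a, λ³c)` or `(λ⁻¹ā, λ³c̄)` for some `λ` of norm 1) if and only
if `c'/c` or `c'/c̄` is a cube in `A`. -/
theorem stmt_18 (𝕜 A : Type*) [Field 𝕜] (h2 : (2 : 𝕜) ≠ 0) (h3 : (3 : 𝕜) ≠ 0)
    [CommRing A] [Algebra 𝕜 A]
    (τ : A) (β : 𝕜) (hβ : β ≠ 0) (hτ : τ * τ = algebraMap 𝕜 A (-β))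
    (bA : Module.Basis (Fin 2) 𝕜 A) (hb0 : bA 0 = 1) (hb1 : bA 1 = τ)
    (conj : A ≃ₐ[𝕜] A) (hconjτ : conj τ = -τ)
    (a c a' c' : A)
    (hac : c * conj c - a * conj a = 1)
    (hac' : c' * conj c' - a' * conj a' = 1)
    (ha : a = 0)
    (hN : a' * conj a' = a * conj a)
    (hK : a' ^ 3 * c' + (conj a') ^ 3 * conj c' = a ^ 3 * c + (conj a) ^ 3 * conj c) :
    a' = 0 ∧
    ((∃ l : A, l * conj l = 1 ∧
        ((a' = conj l * a ∧ c' = l ^ 3 * c) ∨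
         (a' = conj l * conj a ∧ c' = l ^ 3 * conj c))) ↔
      ∃ z : A, c' = z ^ 3 * c ∨ c' = z ^ 3 * conj c) :=
  stmt_18_general 𝕜 A h2 τ β hβ hτ bA hb0 hb1 conj hconjτ a c a' c' hac hac' ha hN hK
end

section
/- Let F_{ac}, F_{a'c'} be maps on C₀(-q) with N(c) - N(a) = 1 = N(c') - N(a') and c = 0. If N(a') = N(a) and K(a',c') = K(a,c), then c' = 0 and F_{ac} and F_{a'c'} are equivalent under the subgroup of isometries of the form x ↦ λx with N(λ) = 1, via λ = a/a'. -/
/-!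
With `c = 0` both `a` and `a'` have norm `-1`, so `N(c') = 0`, and multiplying the relation
`K(a', c') = 0` by `c'` leaves `a'³ c'² = 0`. As `a'` is a unit, `c'² = 0`; since `β ≠ 0` and
`2 ≠ 0`, the algebra `𝕜[τ]/(τ² + β)` is reduced, so `c' = 0`. Finally `λ = a/a' = -a·ā'`.
-/

theorem isReduced_of_basis_one_of_mul_self_eq_algebraMap {𝕜 A : Type*} [Field 𝕜] [CommRing A]
    [Algebra 𝕜 A] (h2 : (2 : 𝕜) ≠ 0) {τ : A} {β : 𝕜} (hβ : β ≠ 0)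
    (hτ : τ * τ = algebraMap 𝕜 A (-β)) (b : Module.Basis (Fin 2) 𝕜 A) (hb0 : b 0 = 1)
    (hb1 : b 1 = τ) : IsReduced A := by
  refine (isReduced_iff_pow_one_lt 2 one_lt_two).2 fun z hz => ?_
  set x := b.repr z 0
  set y := b.repr z 1
  have hz_eq : z = x • b 0 + y • b 1 := by
    simpa only [Fin.sum_univ_two] using (b.sum_repr z).symm
  have hsq : (x * x - β * (y * y)) • b 0 + (2 * x * y) • b 1 = 0 := by
    rw [map_neg] at hτ
    rw [← hz, hz_eq, hb0, hb1]
    simp only [Algebra.smul_def, map_sub, map_mul, map_ofNat, mul_one]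
    linear_combination -(algebraMap 𝕜 A y * algebraMap 𝕜 A y) * hτ
  have hcoeff := Fintype.linearIndependent_iff.1 b.linearIndependent ![_, _]
    (by simpa [Fin.sum_univ_two] using hsq)
  have hx2 : x * x = β * (y * y) := sub_eq_zero.1 (hcoeff 0)
  have hxy : x * y = 0 := by simpa [mul_assoc, h2] using hcoeff 1
  obtain hx | hy := mul_eq_zero.1 hxy
  · have hy : y = 0 := by simpa [hx, hβ] using hx2
    simp [hz_eq, hx, hy]
  · have hx : x = 0 := by simpa [hy] using hx2
    simp [hz_eq, hx, hy]

theorem mul_self_eq_zero_of_pow_three_mul_add_eq_zero {R : Type*} [CommRing R] {a b c d : R}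
    (hab : a * b = -1) (hcd : c * d = 0) (h : a ^ 3 * c + b ^ 3 * d = 0) : c * c = 0 := by
  -- `c • h` reads `a³c² = 0` modulo `hcd`, and `a` is a unit with inverse `-b`
  linear_combination -(b ^ 3 * c) * h + b ^ 6 * hcd + c * c * ((a * b) ^ 2 - a * b + 1) * hab

theorem exists_mul_map_eq_one_and_mul_eq {R F : Type*} [CommRing R] [FunLike F R R]
    [RingHomClass F R R] (σ : F) {a a' : R} (ha : a * σ a = -1) (ha' : a' * σ a' = -1) :
    ∃ l : R, l * σ l = 1 ∧ l * a' = a := by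
  have hσa' : σ a' * σ (σ a') = -1 := by simpa using congrArg σ ha'
  refine ⟨-(a * σ a'), ?_, by linear_combination (-a) * ha'⟩
  simp only [map_neg, map_mul]
  linear_combination (σ a' * σ (σ a')) * ha - hσa'

theorem stmt_19_general (𝕜 A : Type*) [Field 𝕜] (h2 : (2 : 𝕜) ≠ 0)
    [CommRing A] [Algebra 𝕜 A]
    (τ : A) (β : 𝕜) (hβ : β ≠ 0) (hτ : τ * τ = algebraMap 𝕜 A (-β))
    (bA : Module.Basis (Fin 2) 𝕜 A) (hb0 : bA 0 = 1) (hb1 : bA 1 = τ)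
    (conj : A ≃ₐ[𝕜] A)
    (a c a' c' : A)
    (hac : c * conj c - a * conj a = 1)
    (hac' : c' * conj c' - a' * conj a' = 1)
    (hc : c = 0)
    (hN : a' * conj a' = a * conj a)
    (hK : a' ^ 3 * c' + (conj a') ^ 3 * conj c' = a ^ 3 * c + (conj a) ^ 3 * conj c) :
    c' = 0 ∧
    ∃ l : A, l * conj l = 1 ∧ l * a' = a ∧ c' = l ^ 3 * c := by
  subst hc
  have hred : IsReduced A := isReduced_of_basis_one_of_mul_self_eq_algebraMap h2 hβ hτ bA hb0 hb1
  have ha : a * conj a = -1 := neg_eq_iff_eq_neg.1 (by simpa using hac)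
  have ha' : a' * conj a' = -1 := hN.trans ha
  have hc'c' : c' * conj c' = 0 := by linear_combination hac' + ha'
  have hK0 : a' ^ 3 * c' + (conj a') ^ 3 * conj c' = 0 := by simpa using hK
  have hc' : c' = 0 :=
    (isReduced_iff_pow_one_lt 2 one_lt_two).1 hred c'
      (by rw [sq]; exact mul_self_eq_zero_of_pow_three_mul_add_eq_zero ha' hc'c' hK0)
  obtain ⟨l, hl, hla⟩ := exists_mul_map_eq_one_and_mul_eq conj ha ha'
  exact ⟨hc', l, hl, hla, by simp [hc']⟩

/-- in the model `A` of `C₀(-q)`, for `F_{ac}`, `F_{a'c'}` with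
`N(c) - N(a) = 1 = N(c') - N(a')` and `c = 0`: if `N(a') = N(a)` and
`K(a',c') = K(a,c)` (with `K(a,c) = a³c + ā³c̄`), then `c' = 0` and `F_{ac}`
and `F_{a'c'}` are equivalent under the isometries `x ↦ λx` with `N(λ) = 1`,
via `λ = a/a'` (i.e. some `λ` of norm 1 with `λ·a' = a` and `c' = λ³c`). -/
theorem stmt_19 (𝕜 A : Type*) [Field 𝕜] (h2 : (2 : 𝕜) ≠ 0) (h3 : (3 : 𝕜) ≠ 0)
    [CommRing A] [Algebra 𝕜 A]
    (τ : A) (β : 𝕜) (hβ : β ≠ 0) (hτ : τ * τ = algebraMap 𝕜 A (-β))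
    (bA : Module.Basis (Fin 2) 𝕜 A) (hb0 : bA 0 = 1) (hb1 : bA 1 = τ)
    (conj : A ≃ₐ[𝕜] A) (hconjτ : conj τ = -τ)
    (a c a' c' : A)
    (hac : c * conj c - a * conj a = 1)
    (hac' : c' * conj c' - a' * conj a' = 1)
    (hc : c = 0)
    (hN : a' * conj a' = a * conj a)
    (hK : a' ^ 3 * c' + (conj a') ^ 3 * conj c' = a ^ 3 * c + (conj a) ^ 3 * conj c) :
    c' = 0 ∧
    ∃ l : A, l * conj l = 1 ∧ l * a' = a ∧ c' = l ^ 3 * c :=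
  stmt_19_general 𝕜 A h2 τ β hβ hτ bA hb0 hb1 conj a c a' c' hac hac' hc hN hK
end
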